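/- Let $n \ge 2$, $d \ge 2$, $l \in \{2,\dots,d\}$, and let $X \in \mathbb{R}^{n \times d}$ be the Case-2 matrix with rows $X_1 = -\tfrac{1}{\sqrt{2}} e_1 + \tfrac{1}{\sqrt{2}} e_l$ and $X_i = \tfrac{1}{\sqrt{2}} e_1 + \tfrac{1}{\sqrt{2}} e_l$ for all $i \in \{2,\dots,n\}$. Then for every $w \in \mathbb{R}^d$, $\max_{i \in \{1,\dots,n\}} \|w - X_i\|^2 \ge w_1^2 + \left(w_l - \tfrac{1}{\sqrt{2}}\right)^2 + \sum_{j \notin \{1, l\}} w_j^2 + \tfrac{1}{2}$. -/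

import Mathlib

/-- Pointwise lower bound on the enclosing-ball radius of the Case-2 instance
in the quantum lower bound for minimum enclosing ball. -/
theorem case2_meb_pointwise_bound (n d : ℕ) (hn : 2 ≤ n) (hd : 2 ≤ d)
    (l : Fin d) (hl : (l : ℕ) ≠ 0)
    (X : Fin n → EuclideanSpace ℝ (Fin d))
    (hX1 : ∀ i : Fin n, (i : ℕ) = 0 →
      X i = -((Real.sqrt 2)⁻¹ • EuclideanSpace.single (⟨0, by omega⟩ : Fin d) (1 : ℝ))
        + (Real.sqrt 2)⁻¹ • EuclideanSpace.single l (1 : ℝ))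
    (hXi : ∀ i : Fin n, (i : ℕ) ≠ 0 →
      X i = (Real.sqrt 2)⁻¹ • EuclideanSpace.single (⟨0, by omega⟩ : Fin d) (1 : ℝ)
        + (Real.sqrt 2)⁻¹ • EuclideanSpace.single l (1 : ℝ))
    (w : EuclideanSpace ℝ (Fin d)) :
    (⨆ i : Fin n, ‖w - X i‖ ^ 2)
      ≥ (w (⟨0, by omega⟩ : Fin d)) ^ 2 + (w l - (Real.sqrt 2)⁻¹) ^ 2
        + (∑ j ∈ Finset.univ \ {(⟨0, by omega⟩ : Fin d), l}, (w j) ^ 2)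
        + 1 / 2 := by
  set c : ℝ := (Real.sqrt 2)⁻¹ with hc
  have hc2 : c ^ 2 = 1/2 := by
    rw [hc, inv_pow, Real.sq_sqrt (by norm_num : (2:ℝ) ≥ 0)]; norm_num
  set j0 : Fin d := ⟨0, by omega⟩ with hj0
  have hne : j0 ≠ l := by
    intro h; exact hl (by simp [← h, hj0])
  have hsub : ({j0, l} : Finset (Fin d)) ⊆ Finset.univ := Finset.subset_univ _
  have key : ∀ (α β : ℝ),
      ‖w - (α • EuclideanSpace.single j0 (1:ℝ) + β • EuclideanSpace.single l (1:ℝ))‖ ^ 2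
      = (w j0 - α)^2 + (w l - β)^2 + ∑ j ∈ Finset.univ \ {j0, l}, (w j)^2 := by
    intro α β
    have hn2 : ‖w - (α • EuclideanSpace.single j0 (1:ℝ) + β • EuclideanSpace.single l (1:ℝ))‖ ^ 2
        = ∑ j, (w j - (α • EuclideanSpace.single j0 (1:ℝ) + β • EuclideanSpace.single l (1:ℝ)) j)^2 := by
      rw [EuclideanSpace.norm_eq, Real.sq_sqrt (Finset.sum_nonneg fun _ _ => sq_nonneg _)]
      simp [sq_abs]
    rw [hn2, ← Finset.sum_sdiff hsub]
    have h1 : ∑ j ∈ ({j0, l} : Finset (Fin d)), (w j - (α • EuclideanSpace.single j0 (1:ℝ) + β • EuclideanSpace.single l (1:ℝ)) j)^2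
        = (w j0 - α)^2 + (w l - β)^2 := by
      rw [Finset.sum_pair hne]
      simp [EuclideanSpace.single_apply, hne, hne.symm]
    have h2 : ∑ j ∈ Finset.univ \ ({j0, l} : Finset (Fin d)), (w j - (α • EuclideanSpace.single j0 (1:ℝ) + β • EuclideanSpace.single l (1:ℝ)) j)^2
        = ∑ j ∈ Finset.univ \ {j0, l}, (w j)^2 := by
      apply Finset.sum_congr rfl
      intro j hj
      simp only [Finset.mem_sdiff, Finset.mem_insert, Finset.mem_singleton] at hj
      push_neg at hj
      simp [EuclideanSpace.single_apply, hj.2.1, hj.2.2]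
    rw [h1, h2]; ring
  have i0 : Fin n := ⟨0, by omega⟩
  have hA : ‖w - X ⟨0, by omega⟩‖ ^ 2
      = (w j0 + c)^2 + (w l - c)^2 + ∑ j ∈ Finset.univ \ {j0, l}, (w j)^2 := by
    rw [hX1 ⟨0, by omega⟩ rfl]
    have : -((Real.sqrt 2)⁻¹ • EuclideanSpace.single j0 (1 : ℝ))
        + (Real.sqrt 2)⁻¹ • EuclideanSpace.single l (1 : ℝ)
        = (-c) • EuclideanSpace.single j0 (1:ℝ) + c • EuclideanSpace.single l (1:ℝ) := by
      rw [neg_smul, hc]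
    rw [this, key (-c) c]; ring
  have hB : ‖w - X ⟨1, by omega⟩‖ ^ 2
      = (w j0 - c)^2 + (w l - c)^2 + ∑ j ∈ Finset.univ \ {j0, l}, (w j)^2 := by
    rw [hXi ⟨1, by omega⟩ (by simp), key c c]
  have hbdd : BddAbove (Set.range fun i : Fin n => ‖w - X i‖ ^ 2) :=
    Set.Finite.bddAbove (Set.finite_range _)
  have hle1 : ‖w - X ⟨0, by omega⟩‖ ^ 2 ≤ ⨆ i : Fin n, ‖w - X i‖ ^ 2 := le_ciSup hbdd _
  have hle2 : ‖w - X ⟨1, by omega⟩‖ ^ 2 ≤ ⨆ i : Fin n, ‖w - X i‖ ^ 2 := le_ciSup hbdd _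
  rw [hA] at hle1; rw [hB] at hle2
  nlinarith [hle1, hle2, hc2]
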